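/- Suppose Φ ∈ ℝ^{m×N} satisfies the RIP with constant δ_K. Then for every x ∈ ℝ^N (not necessarily sparse), ‖Φx‖₂ ≤ √(1+δ_K) (‖x‖₂ + ‖x‖₁/√K). -/
import Mathlib

open scoped BigOperators

/-- Squared-sum Euclidean norm of a finite vector. -/
noncomputable def l2norm {ι : Type*} [Fintype ι] (v : ι → ℝ) : ℝ :=
  Real.sqrt (∑ i, v i ^ 2)

/-- The ℓ₁ norm of a finite vector. -/
noncomputable def l1norm {ι : Type*} [Fintype ι] (v : ι → ℝ) : ℝ :=
  ∑ i, |v i|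

/-- `Φ_I q`: the product of the column submatrix `Φ_I` with a coefficient vector `q`. -/
noncomputable def colMul {m N : ℕ} (Φ : Matrix (Fin m) (Fin N) ℝ) (I : Finset (Fin N))
    (q : I → ℝ) : Fin m → ℝ :=
  fun r => ∑ i : I, Φ r i.1 * q i

/-- `Φ_I^* y`: the transpose of the column submatrix applied to `y`. -/
noncomputable def colTMul {m N : ℕ} (Φ : Matrix (Fin m) (Fin N) ℝ) (I : Finset (Fin N))
    (y : Fin m → ℝ) : I → ℝ :=
  fun i => ∑ r, Φ r i.1 * y r

/-- The Gram matrix `Φ_I^* Φ_I`. -/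
noncomputable def gram {m N : ℕ} (Φ : Matrix (Fin m) (Fin N) ℝ) (I : Finset (Fin N)) :
    Matrix I I ℝ :=
  fun i j => ∑ r, Φ r i.1 * Φ r j.1

/-- `Φ` satisfies the restricted isometry property at sparsity `K` with parameter `δ`. -/
def IsRIP {m N : ℕ} (Φ : Matrix (Fin m) (Fin N) ℝ) (K : ℕ) (δ : ℝ) : Prop :=
  ∀ I : Finset (Fin N), I.card ≤ K → ∀ q : I → ℝ,
    (1 - δ) * ∑ i, q i ^ 2 ≤ ∑ r, (colMul Φ I q r) ^ 2 ∧
      ∑ r, (colMul Φ I q r) ^ 2 ≤ (1 + δ) * ∑ i, q i ^ 2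

/-- The RIP constant `δ_K`: the infimum of all admissible RIP parameters. -/
noncomputable def ripConst {m N : ℕ} (Φ : Matrix (Fin m) (Fin N) ℝ) (K : ℕ) : ℝ :=
  sInf {δ : ℝ | 0 ≤ δ ∧ IsRIP Φ K δ}

/-- Projection coefficients `(Φ_I^* Φ_I)⁻¹ Φ_I^* y`. -/
noncomputable def projCoeff {m N : ℕ} (Φ : Matrix (Fin m) (Fin N) ℝ) (I : Finset (Fin N))
    (y : Fin m → ℝ) : I → ℝ :=
  (gram Φ I)⁻¹.mulVec (colTMul Φ I y)

/-- Orthogonal projection of `y` onto the column span of `Φ_I`. -/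
noncomputable def projVec {m N : ℕ} (Φ : Matrix (Fin m) (Fin N) ℝ) (I : Finset (Fin N))
    (y : Fin m → ℝ) : Fin m → ℝ :=
  colMul Φ I (projCoeff Φ I y)

/- ------------------ auxiliary lemmas ------------------- -/

lemma l2norm_nonneg {ι : Type*} [Fintype ι] (v : ι → ℝ) : 0 ≤ l2norm v :=
  Real.sqrt_nonneg _

lemma l1norm_nonneg {ι : Type*} [Fintype ι] (v : ι → ℝ) : 0 ≤ l1norm v :=
  Finset.sum_nonneg fun i _ => abs_nonneg _

lemma l2norm_eq_norm {ι : Type*} [Fintype ι] (v : ι → ℝ) :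
    l2norm v = ‖(WithLp.equiv 2 (ι → ℝ)).symm v‖ := by
  rw [EuclideanSpace.norm_eq]
  simp [l2norm, sq_abs]

lemma l2norm_add_le {ι : Type*} [Fintype ι] (u v : ι → ℝ) :
    l2norm (u + v) ≤ l2norm u + l2norm v := by
  simp only [l2norm_eq_norm]
  exact norm_add_le ((WithLp.equiv 2 (ι → ℝ)).symm u) ((WithLp.equiv 2 (ι → ℝ)).symm v)

lemma sqrt_mul_le_add {a b : ℝ} (ha : 0 ≤ a) (hb : 0 ≤ b) : Real.sqrt (a * b) ≤ a + b := by
  rw [show a + b = Real.sqrt ((a + b) ^ 2) from (Real.sqrt_sq (by positivity)).symm]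
  exact Real.sqrt_le_sqrt (by nlinarith)

/-- The set of admissible RIP parameters is nonempty. -/
lemma rip_set_nonempty {m N : ℕ} (Φ : Matrix (Fin m) (Fin N) ℝ) (K : ℕ) :
    {δ : ℝ | 0 ≤ δ ∧ IsRIP Φ K δ}.Nonempty := by
  set C : ℝ := ∑ r, ∑ i, Φ r i ^ 2 with hC
  have hC0 : 0 ≤ C := Finset.sum_nonneg fun r _ => Finset.sum_nonneg fun i _ => sq_nonneg _
  refine ⟨C + 1, by linarith, fun I hI q => ?_⟩
  have hq0 : (0 : ℝ) ≤ ∑ i, q i ^ 2 := Finset.sum_nonneg fun i _ => sq_nonneg _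
  constructor
  · have h1 : (1 - (C + 1)) * ∑ i, q i ^ 2 ≤ 0 := by
      apply mul_nonpos_of_nonpos_of_nonneg _ hq0
      linarith
    exact h1.trans (Finset.sum_nonneg fun r _ => sq_nonneg _)
  · have key : ∀ r, (colMul Φ I q r) ^ 2 ≤ (∑ i : I, Φ r i.1 ^ 2) * ∑ i, q i ^ 2 := by
      intro r
      exact Finset.sum_mul_sq_le_sq_mul_sq Finset.univ (fun i : I => Φ r i.1) q
    calc ∑ r, (colMul Φ I q r) ^ 2
        ≤ ∑ r, (∑ i : I, Φ r i.1 ^ 2) * ∑ i, q i ^ 2 := Finset.sum_le_sum fun r _ => key r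
      _ = (∑ r, ∑ i : I, Φ r i.1 ^ 2) * ∑ i, q i ^ 2 := by rw [Finset.sum_mul]
      _ ≤ (1 + (C + 1)) * ∑ i, q i ^ 2 := by
          have h3 : ∀ r : Fin m, (∑ i : I, Φ r i.1 ^ 2) ≤ ∑ i, Φ r i ^ 2 := by
            intro r
            rw [Finset.sum_coe_sort I (fun i => Φ r i ^ 2)]
            exact Finset.sum_le_sum_of_subset_of_nonneg (Finset.subset_univ I)
              (fun i _ _ => sq_nonneg _)
          have h2 : (∑ r, ∑ i : I, Φ r i.1 ^ 2) ≤ C := Finset.sum_le_sum fun r _ => h3 r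
          exact mul_le_mul_of_nonneg_right (by linarith) hq0

lemma rip_set_closed {m N : ℕ} (Φ : Matrix (Fin m) (Fin N) ℝ) (K : ℕ) :
    IsClosed {δ : ℝ | 0 ≤ δ ∧ IsRIP Φ K δ} := by
  have heq : {δ : ℝ | 0 ≤ δ ∧ IsRIP Φ K δ} =
      {δ : ℝ | 0 ≤ δ} ∩ ⋂ (I : Finset (Fin N)) (_ : I.card ≤ K) (q : I → ℝ),
        ({δ : ℝ | (1 - δ) * ∑ i, q i ^ 2 ≤ ∑ r, (colMul Φ I q r) ^ 2} ∩
         {δ : ℝ | ∑ r, (colMul Φ I q r) ^ 2 ≤ (1 + δ) * ∑ i, q i ^ 2}) := by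
    ext δ
    simp only [Set.mem_inter_iff, Set.mem_iInter, Set.mem_setOf_eq, IsRIP]
  rw [heq]
  refine (isClosed_le continuous_const continuous_id).inter ?_
  refine isClosed_iInter fun I => isClosed_iInter fun _ => isClosed_iInter fun q => ?_
  exact (isClosed_le (by continuity) continuous_const).inter
    (isClosed_le continuous_const (by continuity))

lemma ripConst_mem {m N : ℕ} (Φ : Matrix (Fin m) (Fin N) ℝ) (K : ℕ) :
    0 ≤ ripConst Φ K ∧ IsRIP Φ K (ripConst Φ K) :=
  IsClosed.csInf_mem (rip_set_closed Φ K) (rip_set_nonempty Φ K) ⟨0, fun _ hδ => hδ.1⟩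

/-- RIP upper bound applied to a vector supported on a small set. -/
lemma rip_apply {m N K : ℕ} {Φ : Matrix (Fin m) (Fin N) ℝ} {δ : ℝ} (hδ : 0 ≤ δ)
    (h : IsRIP Φ K δ) (I : Finset (Fin N)) (hI : I.card ≤ K)
    (y : Fin N → ℝ) (hy : ∀ i ∉ I, y i = 0) :
    l2norm (Φ.mulVec y) ≤ Real.sqrt (1 + δ) * l2norm y := by
  have hcol : ∀ r, colMul Φ I (fun i : I => y i.1) r = Φ.mulVec y r := by
    intro r
    show (∑ i : I, Φ r i.1 * y i.1) = ∑ i, Φ r i * y i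
    rw [Finset.sum_coe_sort I (fun i => Φ r i * y i)]
    apply Finset.sum_subset (Finset.subset_univ I)
    intro i _ hi
    rw [hy i hi, mul_zero]
  have hq := (h I hI (fun i : I => y i.1)).2
  simp only [hcol] at hq
  have hqsum : (∑ i : I, y i.1 ^ 2) = ∑ i, y i ^ 2 := by
    rw [Finset.sum_coe_sort I (fun i => y i ^ 2)]
    apply Finset.sum_subset (Finset.subset_univ I)
    intro i _ hi
    rw [hy i hi]; ring
  rw [hqsum] at hq
  unfold l2norm
  calc Real.sqrt (∑ r, Φ.mulVec y r ^ 2) ≤ Real.sqrt ((1 + δ) * ∑ i, y i ^ 2) :=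
        Real.sqrt_le_sqrt hq
    _ = Real.sqrt (1 + δ) * Real.sqrt (∑ i, y i ^ 2) := Real.sqrt_mul (by linarith) _

/-- existence of a set of `k` indices carrying the largest values of `|x|`. -/
lemma exists_topk {N : ℕ} (x : Fin N → ℝ) :
    ∀ k : ℕ, k ≤ N → ∃ T : Finset (Fin N), T.card = k ∧
      ∀ i ∉ T, ∀ j ∈ T, |x i| ≤ |x j| := by
  intro k
  induction k with
  | zero => exact fun _ => ⟨∅, rfl, by simp⟩
  | succ k ih =>
    intro hk
    obtain ⟨T, hcard, hT⟩ := ih (Nat.le_of_succ_le hk)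
    have hne : (Tᶜ : Finset (Fin N)).Nonempty := by
      rw [← Finset.card_pos, Finset.card_compl, hcard, Fintype.card_fin]
      omega
    obtain ⟨j₀, hj₀mem, hj₀max⟩ := Finset.exists_max_image Tᶜ (fun i => |x i|) hne
    have hj₀T : j₀ ∉ T := Finset.mem_compl.mp hj₀mem
    refine ⟨insert j₀ T, ?_, ?_⟩
    · rw [Finset.card_insert_of_notMem hj₀T, hcard]
    · intro i hi j hj
      have hiT : i ∉ T := fun h => hi (Finset.mem_insert_of_mem h)
      rcases Finset.mem_insert.mp hj with rfl | hjT
      · exact hj₀max i (Finset.mem_compl.mpr hiT)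
      · exact hT i hiT j hjT

/-- Main recursive lemma: blockwise bound with threshold. -/
lemma aux_L {m N : ℕ} (Φ : Matrix (Fin m) (Fin N) ℝ) (K : ℕ) (hK : 0 < K)
    {δ : ℝ} (hδ : 0 ≤ δ) (hrip : IsRIP Φ K δ) :
    ∀ n : ℕ, ∀ x : Fin N → ℝ, (Finset.univ.filter (fun i => x i ≠ 0)).card ≤ n →
    ∀ t : ℝ, 0 ≤ t → (∀ i, |x i| ≤ t) →
    l2norm (Φ.mulVec x) ≤
      Real.sqrt (1 + δ) * (Real.sqrt K * t + l1norm x / Real.sqrt K) := by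
  have hKpos : (0:ℝ) < Real.sqrt K := Real.sqrt_pos.mpr (by exact_mod_cast hK)
  have hsqrt1 : (0:ℝ) ≤ Real.sqrt (1 + δ) := Real.sqrt_nonneg _
  intro n
  induction n with
  | zero =>
    intro x hx t ht hxt
    have hx0 : x = 0 := by
      funext i
      show x i = 0
      by_contra h
      have : i ∈ Finset.univ.filter (fun i => x i ≠ 0) := by simp [h]
      have := Finset.card_pos.mpr ⟨i, this⟩
      omega
    subst hx0
    have : Φ.mulVec 0 = 0 := Matrix.mulVec_zero Φ
    rw [this]
    have h1 : l2norm (0 : Fin m → ℝ) = 0 := by simp [l2norm]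
    have h2 : l1norm (0 : Fin N → ℝ) = 0 := by simp [l1norm]
    rw [h1, h2]
    positivity
  | succ n ih =>
    intro x hx t ht hxt
    set S := Finset.univ.filter (fun i => x i ≠ 0) with hS
    by_cases hcase : S.card ≤ K
    · -- direct RIP application
      have hbound := rip_apply hδ hrip S hcase x (by
        intro i hi
        by_contra h
        exact hi (by simp [hS, h]))
      refine hbound.trans ?_
      apply mul_le_mul_of_nonneg_left _ hsqrt1
      -- l2norm x ≤ √(t * ‖x‖₁) ≤ √K t + ‖x‖₁/√K
      have h1 : (∑ i, x i ^ 2) ≤ t * l1norm x := by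
        unfold l1norm
        rw [Finset.mul_sum]
        apply Finset.sum_le_sum
        intro i _
        have : x i ^ 2 = |x i| * |x i| := by rw [← abs_mul, abs_mul_self]; ring
        rw [this]
        exact mul_le_mul_of_nonneg_right (hxt i) (abs_nonneg _)
      have h2 : t * l1norm x = (Real.sqrt K * t) * (l1norm x / Real.sqrt K) := by
        field_simp
      calc l2norm x ≤ Real.sqrt ((Real.sqrt K * t) * (l1norm x / Real.sqrt K)) := by
            unfold l2norm
            apply Real.sqrt_le_sqrt
            rw [← h2]; exact h1
        _ ≤ Real.sqrt K * t + l1norm x / Real.sqrt K :=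
            sqrt_mul_le_add (mul_nonneg (Real.sqrt_nonneg _) ht)
              (div_nonneg (l1norm_nonneg x) hKpos.le)
    · -- recursive case
      push_neg at hcase
      have hKN : K ≤ N := le_trans (le_of_lt hcase) (by
        simpa using Finset.card_le_card (Finset.subset_univ S))
      obtain ⟨T, hTcard, hTtop⟩ := exists_topk x K hKN
      have hTne : T.Nonempty := Finset.card_pos.mp (by omega)
      obtain ⟨j₀, hj₀T, hj₀min⟩ := Finset.exists_min_image T (fun i => |x i|) hTne
      set t' := |x j₀| with ht'
      set y : Fin N → ℝ := fun i => if i ∈ T then x i else 0 with hy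
      set z : Fin N → ℝ := fun i => if i ∈ T then 0 else x i with hz
      have hxyz : x = y + z := by
        funext i
        simp only [hy, hz, Pi.add_apply]
        by_cases h : i ∈ T <;> simp [h]
      -- l1 norms add
      have hl1 : l1norm x = l1norm y + l1norm z := by
        unfold l1norm
        rw [← Finset.sum_add_distrib]
        apply Finset.sum_congr rfl
        intro i _
        by_cases h : i ∈ T <;> simp [hy, hz, h]
      -- bound for y
      have hyb : l2norm (Φ.mulVec y) ≤ Real.sqrt (1 + δ) * (Real.sqrt K * t) := by
        have := rip_apply hδ hrip T (le_of_eq hTcard) y (by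
          intro i hi; simp [hy, hi])
        refine this.trans ?_
        apply mul_le_mul_of_nonneg_left _ hsqrt1
        have h1 : (∑ i, y i ^ 2) ≤ K * t ^ 2 := by
          have : (∑ i, y i ^ 2) = ∑ i ∈ T, x i ^ 2 := by
            rw [show (∑ i, y i ^ 2) = ∑ i, if i ∈ T then x i ^ 2 else 0 by
              apply Finset.sum_congr rfl; intro i _
              by_cases h : i ∈ T <;> simp [hy, h]]
            rw [Finset.sum_ite_mem, Finset.univ_inter]
          rw [this]
          calc (∑ i ∈ T, x i ^ 2) ≤ ∑ i ∈ T, t ^ 2 := by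
                apply Finset.sum_le_sum
                intro i _
                rw [← sq_abs]
                exact pow_le_pow_left₀ (abs_nonneg _) (hxt i) 2
            _ = K * t ^ 2 := by rw [Finset.sum_const, hTcard]; push_cast; ring
        unfold l2norm
        calc Real.sqrt (∑ i, y i ^ 2) ≤ Real.sqrt ((K : ℝ) * t ^ 2) := Real.sqrt_le_sqrt h1
          _ = Real.sqrt K * t := by
              rw [Real.sqrt_mul (by positivity), Real.sqrt_sq ht]
      -- bound for z via induction
      have hzcard : (Finset.univ.filter (fun i => z i ≠ 0)).card ≤ n := by
        -- exists j in T with x j ≠ 0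
        have hjex : ∃ j ∈ T, x j ≠ 0 := by
          by_contra h
          push_neg at h
          have ht'0 : t' = 0 := by rw [ht', h j₀ hj₀T, abs_zero]
          have : ∀ i, x i = 0 := by
            intro i
            by_cases hi : i ∈ T
            · exact h i hi
            · have := hTtop i hi j₀ hj₀T
              rw [← ht', ht'0] at this
              exact abs_eq_zero.mp (le_antisymm this (abs_nonneg _))
          have : S = ∅ := by
            apply Finset.eq_empty_of_forall_notMem
            intro i hi
            rw [hS, Finset.mem_filter] at hi
            exact hi.2 (this i)
          rw [this] at hcase
          simp at hcase
        obtain ⟨j, hjT, hjx⟩ := hjex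
        have hsub : Finset.univ.filter (fun i => z i ≠ 0) ⊆ S.erase j := by
          intro i hi
          rw [Finset.mem_filter] at hi
          have hiz : z i ≠ 0 := hi.2
          have hiT : i ∉ T := by
            intro h
            apply hiz
            simp [hz, h]
          have hix : x i ≠ 0 := by
            intro h
            apply hiz
            simp [hz, hiT, h]
          apply Finset.mem_erase.mpr
          exact ⟨fun h => hiT (h ▸ hjT), by simp [hS, hix]⟩
        calc (Finset.univ.filter (fun i => z i ≠ 0)).card ≤ (S.erase j).card :=
              Finset.card_le_card hsub
          _ = S.card - 1 := Finset.card_erase_of_mem (by simp [hS, hjx])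
          _ ≤ n := by omega
      have hzt : ∀ i, |z i| ≤ t' := by
        intro i
        by_cases h : i ∈ T
        · simp [hz, h, ht', abs_nonneg]
        · simpa [hz, h] using hTtop i h j₀ hj₀T
      have hzb := ih z hzcard t' (abs_nonneg _) hzt
      -- √K t' ≤ l1norm y / √K
      have hyt' : Real.sqrt K * t' ≤ l1norm y / Real.sqrt K := by
        have h1 : (K : ℝ) * t' ≤ l1norm y := by
          have : (∑ i ∈ T, t') ≤ ∑ i ∈ T, |x i| := by
            apply Finset.sum_le_sum
            intro i hi
            exact hj₀min i hi
          rw [Finset.sum_const, hTcard, nsmul_eq_mul] at this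
          refine this.trans ?_
          unfold l1norm
          rw [show (∑ i, |y i|) = ∑ i, if i ∈ T then |x i| else 0 by
            apply Finset.sum_congr rfl; intro i _
            by_cases h : i ∈ T <;> simp [hy, h]]
          rw [Finset.sum_ite_mem, Finset.univ_inter]
        rw [le_div_iff₀ hKpos]
        calc Real.sqrt K * t' * Real.sqrt K = (K : ℝ) * t' := by
              rw [show Real.sqrt K * t' * Real.sqrt K = (Real.sqrt K * Real.sqrt K) * t' by ring,
                Real.mul_self_sqrt (by positivity)]
          _ ≤ l1norm y := h1
      -- combine
      calc l2norm (Φ.mulVec x) = l2norm (Φ.mulVec y + Φ.mulVec z) := by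
            rw [hxyz, Matrix.mulVec_add]
        _ ≤ l2norm (Φ.mulVec y) + l2norm (Φ.mulVec z) := l2norm_add_le _ _
        _ ≤ Real.sqrt (1 + δ) * (Real.sqrt K * t) +
            Real.sqrt (1 + δ) * (Real.sqrt K * t' + l1norm z / Real.sqrt K) :=
              add_le_add hyb hzb
        _ ≤ Real.sqrt (1 + δ) * (Real.sqrt K * t) +
            Real.sqrt (1 + δ) * (l1norm y / Real.sqrt K + l1norm z / Real.sqrt K) := by
              have := mul_le_mul_of_nonneg_left
                (add_le_add_right hyt' (l1norm z / Real.sqrt K)) hsqrt1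
              linarith
        _ = Real.sqrt (1 + δ) * (Real.sqrt K * t + l1norm x / Real.sqrt K) := by
              rw [hl1]; ring

theorem rip_l1_l2_bound {m N : ℕ} (Φ : Matrix (Fin m) (Fin N) ℝ) (K : ℕ)
    (hK : 0 < K) (x : Fin N → ℝ) :
    l2norm (Φ.mulVec x) ≤
      Real.sqrt (1 + ripConst Φ K) * (l2norm x + l1norm x / Real.sqrt K) := by
  obtain ⟨hδ0, hrip⟩ := ripConst_mem Φ K
  set δ := ripConst Φ K
  have hKpos : (0:ℝ) < Real.sqrt K := Real.sqrt_pos.mpr (by exact_mod_cast hK)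
  have hsqrt1 : (0:ℝ) ≤ Real.sqrt (1 + δ) := Real.sqrt_nonneg _
  set S := Finset.univ.filter (fun i => x i ≠ 0) with hS
  by_cases hcase : S.card ≤ K
  · have hbound := rip_apply hδ0 hrip S hcase x (by
      intro i hi
      by_contra h
      exact hi (by simp [hS, h]))
    refine hbound.trans ?_
    apply mul_le_mul_of_nonneg_left _ hsqrt1
    have : 0 ≤ l1norm x / Real.sqrt K := div_nonneg (l1norm_nonneg x) hKpos.le
    linarith
  · push_neg at hcase
    have hKN : K ≤ N := le_trans (le_of_lt hcase) (by
      simpa using Finset.card_le_card (Finset.subset_univ S))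
    obtain ⟨T, hTcard, hTtop⟩ := exists_topk x K hKN
    have hTne : T.Nonempty := Finset.card_pos.mp (by omega)
    obtain ⟨j₀, hj₀T, hj₀min⟩ := Finset.exists_min_image T (fun i => |x i|) hTne
    set t' := |x j₀| with ht'
    set y : Fin N → ℝ := fun i => if i ∈ T then x i else 0 with hy
    set z : Fin N → ℝ := fun i => if i ∈ T then 0 else x i with hz
    have hxyz : x = y + z := by
      funext i
      simp only [hy, hz, Pi.add_apply]
      by_cases h : i ∈ T <;> simp [h]
    have hl1 : l1norm x = l1norm y + l1norm z := by
      unfold l1norm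
      rw [← Finset.sum_add_distrib]
      apply Finset.sum_congr rfl
      intro i _
      by_cases h : i ∈ T <;> simp [hy, hz, h]
    -- bound for y: l2norm y ≤ l2norm x
    have hyb : l2norm (Φ.mulVec y) ≤ Real.sqrt (1 + δ) * l2norm x := by
      have := rip_apply hδ0 hrip T (le_of_eq hTcard) y (by
        intro i hi; simp [hy, hi])
      refine this.trans ?_
      apply mul_le_mul_of_nonneg_left _ hsqrt1
      unfold l2norm
      apply Real.sqrt_le_sqrt
      apply Finset.sum_le_sum
      intro i _
      by_cases h : i ∈ T <;> simp [hy, h, sq_nonneg]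
    -- bound for z via aux_L
    have hzt : ∀ i, |z i| ≤ t' := by
      intro i
      by_cases h : i ∈ T
      · simp [hz, h, ht', abs_nonneg]
      · simpa [hz, h] using hTtop i h j₀ hj₀T
    have hzb := aux_L Φ K hK hδ0 hrip (Finset.univ.filter (fun i => z i ≠ 0)).card z
      le_rfl t' (abs_nonneg _) hzt
    have hyt' : Real.sqrt K * t' ≤ l1norm y / Real.sqrt K := by
      have h1 : (K : ℝ) * t' ≤ l1norm y := by
        have : (∑ i ∈ T, t') ≤ ∑ i ∈ T, |x i| := by
          apply Finset.sum_le_sum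
          intro i hi
          exact hj₀min i hi
        rw [Finset.sum_const, hTcard, nsmul_eq_mul] at this
        refine this.trans ?_
        unfold l1norm
        rw [show (∑ i, |y i|) = ∑ i, if i ∈ T then |x i| else 0 by
          apply Finset.sum_congr rfl; intro i _
          by_cases h : i ∈ T <;> simp [hy, h]]
        rw [Finset.sum_ite_mem, Finset.univ_inter]
      rw [le_div_iff₀ hKpos]
      calc Real.sqrt K * t' * Real.sqrt K = (K : ℝ) * t' := by
            rw [show Real.sqrt K * t' * Real.sqrt K = (Real.sqrt K * Real.sqrt K) * t' by ring,
              Real.mul_self_sqrt (by positivity)]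
        _ ≤ l1norm y := h1
    calc l2norm (Φ.mulVec x) = l2norm (Φ.mulVec y + Φ.mulVec z) := by
          rw [hxyz, Matrix.mulVec_add]
      _ ≤ l2norm (Φ.mulVec y) + l2norm (Φ.mulVec z) := l2norm_add_le _ _
      _ ≤ Real.sqrt (1 + δ) * l2norm x +
          Real.sqrt (1 + δ) * (Real.sqrt K * t' + l1norm z / Real.sqrt K) :=
            add_le_add hyb hzb
      _ ≤ Real.sqrt (1 + δ) * l2norm x +
          Real.sqrt (1 + δ) * (l1norm y / Real.sqrt K + l1norm z / Real.sqrt K) := by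
            have := mul_le_mul_of_nonneg_left
              (add_le_add_right hyt' (l1norm z / Real.sqrt K)) hsqrt1
            linarith
      _ = Real.sqrt (1 + δ) * (l2norm x + l1norm x / Real.sqrt K) := by
            rw [hl1]; ring
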